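/- Let B0 ∈ Ad and let κ0 be a quasi-eigenvalue of B0 with κ0 ∈ i·ℝ₊ (i.e., Re κ0 = 0 and Im κ0 > 0). If B0 is not a.e. equal to the constant b1 and not a.e. equal to the constant b2, then there exist β1 > 0 and B1 ∈ Ad such that κ0 − i β1 is a quasi-eigenvalue of B1 (i.e., κ0 − i β1 ∈ K(Ad)). -/

import Mathlib

/-!
Write `κ0 = i t₀`; the problem becomes `y'' = t₀² B0 y`, `y'(0) = 0`, `y'(1) = t₀ y(1)`. By
uniqueness for the initial value problem `y(0) ≠ 0`, so the real part `u` of `y / y(0)` is a real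
solution with `u(0) = 1`, `u'(0) = 0`, and `u > 0` because `B0 ≥ 0`. The function
`v = cosh (t₀ √b2 x)` solves the equation for the constant structure `b2`, and the Wronskian
`u' v - u v'` vanishes at `0` and has derivative `t₀² (B0 - b2) u v ≤ 0`, not a.e. zero. Its
negativity at `1` reads `√b2 tanh (t₀ √b2) > 1`. Since `i t` is a quasi-eigenvalue of the constant
structure `b2` when `√b2 tanh (t √b2) = 1`, the intermediate value theorem gives such a
`t₁ ∈ (0, t₀)`; take `B1 ≡ b2` and `β1 = t₀ - t₁`.
-/

open MeasureTheory Set Complex intervalIntegral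

noncomputable section

/-- The Lebesgue measure restricted to the interval `(0,1)`. -/
def mu01 : Measure ℝ := volume.restrict (Set.Ioo 0 1)

/-- `y` (with derivative `y'`) is a `W^{2,∞}` solution of `y'' + z² B y = 0` on `(0,1)`:
`y ∈ C¹[0,1]`, `y'` is Lipschitz (so `y'' ∈ L^∞` exists a.e.), and the equation holds a.e. -/
def IsW2Sol (B : ℝ → ℂ) (z : ℂ) (y y' : ℝ → ℂ) : Prop :=
  (∀ x ∈ Set.Icc (0:ℝ) 1, HasDerivWithinAt y (y' x) (Set.Icc (0:ℝ) 1) x) ∧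
  (∃ L : NNReal, LipschitzOnWith L y' (Set.Icc (0:ℝ) 1)) ∧
  (∀ᵐ x ∂mu01, HasDerivAt y' (-(z^2) * B x * y x) x)

/-- `κ` is a quasi-eigenvalue of the structure `B`: `κ ≠ 0` and there is a nonzero
`W^{2,∞}` solution of `y'' + κ² B y = 0` with `y'(0) = 0` and `κ y(1) = i y'(1)`. -/
def QuasiEigen (B : ℝ → ℂ) (κ : ℂ) : Prop :=
  κ ≠ 0 ∧ ∃ y y' : ℝ → ℂ, IsW2Sol B κ y y' ∧
    (∃ x ∈ Set.Icc (0:ℝ) 1, y x ≠ 0) ∧ y' 0 = 0 ∧ κ * y 1 = Complex.I * y' 1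

/-- `y` is the solution `φ(·, z; B)` (normalized by `y(0)=1`, `y'(0)=0`). -/
def IsPhi (B : ℝ → ℂ) (z : ℂ) (y y' : ℝ → ℂ) : Prop :=
  IsW2Sol B z y y' ∧ y 0 = 1 ∧ y' 0 = 0

/-- `y` is the solution `ψ(·, z; B)` (normalized by `y(0)=0`, `y'(0)=1`). -/
def IsPsi (B : ℝ → ℂ) (z : ℂ) (y y' : ℝ → ℂ) : Prop :=
  IsW2Sol B z y y' ∧ y 0 = 0 ∧ y' 0 = 1

/-- Membership of a real-valued structure in the admissible family `Ad`:
`B ∈ L^∞((0,1);ℝ)` with `b1 ≤ B(x) ≤ b2` a.e. on `(0,1)`. -/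
def InAd (b1 b2 : ℝ) (B : ℝ → ℝ) : Prop :=
  AEStronglyMeasurable B mu01 ∧ ∀ᵐ x ∂mu01, b1 ≤ B x ∧ B x ≤ b2

/-- The set `K(Ad)` of all quasi-eigenvalues of admissible structures. -/
def KAd (b1 b2 : ℝ) : Set ℂ :=
  {κ | ∃ B : ℝ → ℝ, InAd b1 b2 B ∧ QuasiEigen (fun x => ((B x : ℝ) : ℂ)) κ}

open scoped NNReal Interval

theorem AbsolutelyContinuousOnInterval.integral_eq_sub_of_ae_hasDerivAt {f f' : ℝ → ℝ}
    {a b : ℝ} (hab : a ≤ b) (hf : AbsolutelyContinuousOnInterval f a b)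
    (hf' : ∀ᵐ x ∂volume.restrict (Ioo a b), HasDerivAt f (f' x) x) :
    IntervalIntegrable f' volume a b ∧ ∫ x in a..b, f' x = f b - f a := by
  have hderiv : ∀ᵐ x ∂volume.restrict (Ι a b), deriv f x = f' x := by
    rw [uIoc_of_le hab, ← Measure.restrict_congr_set Ioo_ae_eq_Ioc]
    filter_upwards [hf'] with x hx using hx.deriv
  refine ⟨hf.intervalIntegrable_deriv.congr_ae hderiv, ?_⟩
  rw [← hf.integral_deriv_eq_sub]
  exact (integral_congr_ae (ae_imp_of_ae_restrict hderiv)).symm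

theorem intervalIntegral.integral_nonneg_of_ae_restrict_Ioo {f : ℝ → ℝ} {a b : ℝ} (hab : a ≤ b)
    (hf : ∀ᵐ x ∂volume.restrict (Ioo a b), 0 ≤ f x) : 0 ≤ ∫ x in a..b, f x :=
  integral_nonneg_of_ae_restrict hab (by rwa [← Measure.restrict_congr_set Ioo_ae_eq_Icc])

theorem AbsolutelyContinuousOnInterval.le_mul_exp_of_ae_deriv_le {f f' : ℝ → ℝ} {a b K : ℝ}
    (hab : a ≤ b) (hf : AbsolutelyContinuousOnInterval f a b)
    (hf' : ∀ᵐ x ∂volume.restrict (Ioo a b), HasDerivAt f (f' x) x ∧ f' x ≤ K * f x) :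
    f b ≤ f a * Real.exp (K * (b - a)) := by
  set e : ℝ → ℝ := fun x => Real.exp (-(K * x))
  have he : ∀ x, HasDerivAt e (-K * e x) x := fun x => by
    simpa [e, mul_comm] using ((hasDerivAt_id x).const_mul K).neg.exp
  have hac : AbsolutelyContinuousOnInterval (fun x => f x * e x) a b :=
    hf.fun_mul (ContDiffOn.absolutelyContinuousOnInterval (by fun_prop))
  have hftc := (hac.integral_eq_sub_of_ae_hasDerivAt hab (f' := fun x => (f' x - K * f x) * e x)
    (by filter_upwards [hf'] with x hx using (hx.1.mul (he x)).congr_deriv (by ring))).2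
  have hnonpos : 0 ≤ ∫ x in a..b, -((f' x - K * f x) * e x) :=
    intervalIntegral.integral_nonneg_of_ae_restrict_Ioo hab <| by
      filter_upwards [hf'] with x hx
      nlinarith [hx.2, Real.exp_pos (-(K * x))]
  rw [intervalIntegral.integral_neg, hftc] at hnonpos
  have hea : e a = e b * Real.exp (K * (b - a)) := by
    simp only [e, ← Real.exp_add]; ring_nf
  rw [hea] at hnonpos
  have heb : 0 < e b := Real.exp_pos _
  nlinarith

/-- The real counterpart of `IsW2Sol`, written as `u'' = q u`. -/
structure IsRealSol (q u u' : ℝ → ℝ) : Prop where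
  hasDerivWithinAt : ∀ x ∈ Icc (0:ℝ) 1, HasDerivWithinAt u (u' x) (Icc 0 1) x
  lipschitzOnWith_deriv : ∃ L : ℝ≥0, LipschitzOnWith L u' (Icc 0 1)
  hasDerivAt_deriv : ∀ᵐ x ∂mu01, HasDerivAt u' (q x * u x) x

namespace IsRealSol

variable {q u u' : ℝ → ℝ}

theorem hasDerivAt (h : IsRealSol q u u') {x : ℝ} (hx : x ∈ Ioo (0:ℝ) 1) :
    HasDerivAt u (u' x) x :=
  (h.hasDerivWithinAt x (Ioo_subset_Icc_self hx)).hasDerivAt (Icc_mem_nhds hx.1 hx.2)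

theorem continuousOn (h : IsRealSol q u u') : ContinuousOn u (Icc 0 1) :=
  fun x hx => (h.hasDerivWithinAt x hx).continuousWithinAt

theorem absolutelyContinuousOnInterval_deriv (h : IsRealSol q u u') {t : ℝ}
    (ht : t ∈ Icc (0:ℝ) 1) : AbsolutelyContinuousOnInterval u' 0 t := by
  obtain ⟨L, hL⟩ := h.lipschitzOnWith_deriv
  refine (hL.mono ?_).absolutelyContinuousOnInterval
  rw [uIcc_of_le ht.1]
  exact Icc_subset_Icc_right ht.2

theorem absolutelyContinuousOnInterval (h : IsRealSol q u u') {t : ℝ}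
    (ht : t ∈ Icc (0:ℝ) 1) : AbsolutelyContinuousOnInterval u 0 t := by
  obtain ⟨L, hL⟩ := h.lipschitzOnWith_deriv
  obtain ⟨C, hC⟩ := isCompact_Icc.exists_bound_of_continuousOn hL.continuousOn
  have hu := (convex_Icc (0:ℝ) 1).lipschitzOnWith_of_nnnorm_hasDerivWithin_le
    h.hasDerivWithinAt (C := C.toNNReal) fun x hx => by
      rw [← NNReal.coe_le_coe, coe_nnnorm]; exact (hC x hx).trans (Real.le_coe_toNNReal C)
  refine (hu.mono ?_).absolutelyContinuousOnInterval
  rw [uIcc_of_le ht.1]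
  exact Icc_subset_Icc_right ht.2

theorem ae_hasDerivAt_deriv (h : IsRealSol q u u') {t : ℝ} (ht : t ≤ 1) :
    ∀ᵐ x ∂volume.restrict (Ioo 0 t), HasDerivAt u' (q x * u x) x :=
  ae_restrict_of_ae_restrict_of_subset (Ioo_subset_Ioo_right ht) h.hasDerivAt_deriv

theorem integral_eq_deriv_sub (h : IsRealSol q u u') {t : ℝ} (ht : t ∈ Icc (0:ℝ) 1) :
    ∫ x in 0..t, q x * u x = u' t - u' 0 :=
  ((h.absolutelyContinuousOnInterval_deriv ht).integral_eq_sub_of_ae_hasDerivAt ht.1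
    (h.ae_hasDerivAt_deriv ht.2)).2

theorem integral_deriv_eq_sub (h : IsRealSol q u u') {t : ℝ} (ht : t ∈ Icc (0:ℝ) 1) :
    ∫ x in 0..t, u' x = u t - u 0 :=
  ((h.absolutelyContinuousOnInterval ht).integral_eq_sub_of_ae_hasDerivAt ht.1 <|
    (ae_restrict_iff' measurableSet_Ioo).2 <| ae_of_all _ fun _ hx =>
      h.hasDerivAt ⟨hx.1, hx.2.trans_le ht.2⟩).2

/-- Gronwall's inequality for the energy `u² + u'²`. -/
theorem eq_zero_of_initial_eq_zero (h : IsRealSol q u u') {M : ℝ} (hq : ∀ᵐ x ∂mu01, |q x| ≤ M)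
    (h0 : u 0 = 0) (h0' : u' 0 = 0) : ∀ x ∈ Icc (0:ℝ) 1, u x = 0 := by
  intro t ht
  have hE := ((h.absolutelyContinuousOnInterval ht).fun_mul
    (h.absolutelyContinuousOnInterval ht)).add
    ((h.absolutelyContinuousOnInterval_deriv ht).fun_mul
      (h.absolutelyContinuousOnInterval_deriv ht))
  have hle := hE.le_mul_exp_of_ae_deriv_le ht.1 (K := 1 + M)
    (f' := fun x => 2 * u x * u' x * (1 + q x)) <| by
      filter_upwards [h.ae_hasDerivAt_deriv ht.2, ae_restrict_mem measurableSet_Ioo,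
        ae_restrict_of_ae_restrict_of_subset (Ioo_subset_Ioo_right ht.2) hq]
        with x hx hmem hqx
      have hux := h.hasDerivAt ⟨hmem.1, hmem.2.trans_le ht.2⟩
      refine ⟨((hux.mul hux).add (hx.mul hx)).congr_deriv (by ring), ?_⟩
      obtain ⟨hqx₁, hqx₂⟩ := abs_le.mp hqx
      simp only [Pi.add_apply]
      nlinarith [sq_nonneg (u x - u' x), sq_nonneg (u x + u' x)]
  simp only [Pi.add_apply, h0, h0', mul_zero, add_zero, zero_mul] at hle
  nlinarith [mul_self_nonneg (u' t)]

/-- As long as `u` stays above `u 0 / 2`, `u'' = q u ≥ 0` keeps `u` from decreasing; so the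
first time `u` reaches `u 0 / 2` cannot exist. -/
theorem pos_of_coeff_nonneg (h : IsRealSol q u u') (hq : ∀ᵐ x ∂mu01, 0 ≤ q x) (h0 : 0 < u 0)
    (h0' : u' 0 = 0) : ∀ x ∈ Icc (0:ℝ) 1, 0 < u x := by
  by_contra! hneg
  obtain ⟨x₀, hx₀, hux₀⟩ := hneg
  set S := Icc (0:ℝ) 1 ∩ u ⁻¹' Iic (u 0 / 2)
  have hSbdd : BddBelow S := ⟨0, fun x hx => hx.1.1⟩
  have hT : sInf S ∈ S :=
    (h.continuousOn.preimage_isClosed_of_isClosed isClosed_Icc isClosed_Iic).csInf_mem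
      ⟨x₀, hx₀, show u x₀ ≤ u 0 / 2 by linarith⟩ hSbdd
  set T := sInf S
  have hT₁ : T ≤ 1 := hT.1.2
  have hT₀ : 0 < T := hT.1.1.lt_of_ne fun hT₀ => by
    have : u T ≤ u 0 / 2 := hT.2
    rw [← hT₀] at this; linarith
  have hbefore : ∀ x ∈ Ico 0 T, u 0 / 2 < u x := fun x hx => by
    by_contra! hle
    exact (csInf_le hSbdd ⟨⟨hx.1, hx.2.le.trans hT₁⟩, hle⟩).not_gt hx.2
  have hu'_nonneg : ∀ r ∈ Icc 0 T, 0 ≤ u' r := fun r hr => by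
    have hr₁ : r ≤ 1 := hr.2.trans hT₁
    have hftc := h.integral_eq_deriv_sub ⟨hr.1, hr₁⟩
    rw [h0', sub_zero] at hftc
    rw [← hftc]
    refine intervalIntegral.integral_nonneg_of_ae_restrict_Ioo hr.1 ?_
    filter_upwards [ae_restrict_of_ae_restrict_of_subset (Ioo_subset_Ioo_right hr₁) hq,
      ae_restrict_mem measurableSet_Ioo] with x hqx hx
    exact mul_nonneg hqx (by linarith [hbefore x ⟨hx.1.le, hx.2.trans_le hr.2⟩])
  have hmono : 0 ≤ u T - u 0 := by
    rw [← h.integral_deriv_eq_sub hT.1]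
    exact intervalIntegral.integral_nonneg hT₀.le hu'_nonneg
  have : u T ≤ u 0 / 2 := hT.2
  linarith

/-- Sturm comparison: the Wronskian `u' v - u v'` has derivative `(q - p) u v`. -/
theorem wronskian_neg_of_le {p v v' : ℝ → ℝ} (hu : IsRealSol q u u') (hv : IsRealSol p v v')
    (hqp : ∀ᵐ x ∂mu01, q x ≤ p x) (hne : ¬ ∀ᵐ x ∂mu01, q x = p x)
    (hu_pos : ∀ x ∈ Icc (0:ℝ) 1, 0 < u x) (hv_pos : ∀ x ∈ Icc (0:ℝ) 1, 0 < v x)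
    (h0 : u' 0 * v 0 - u 0 * v' 0 = 0) : u' 1 * v 1 - u 1 * v' 1 < 0 := by
  have h1 : (1:ℝ) ∈ Icc (0:ℝ) 1 := right_mem_Icc.2 zero_le_one
  set g : ℝ → ℝ := fun x => (p x - q x) * (u x * v x)
  have hW := ((hu.absolutelyContinuousOnInterval_deriv h1).fun_mul
    (hv.absolutelyContinuousOnInterval h1)).sub
    ((hu.absolutelyContinuousOnInterval h1).fun_mul (hv.absolutelyContinuousOnInterval_deriv h1))
  obtain ⟨hint, hftc⟩ :=
    hW.integral_eq_sub_of_ae_hasDerivAt zero_le_one (f' := fun x => -g x) <| by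
    filter_upwards [hu.hasDerivAt_deriv, hv.hasDerivAt_deriv, ae_restrict_mem measurableSet_Ioo]
      with x hu'x hv'x hx
    exact ((hu'x.mul (hv.hasDerivAt hx)).sub ((hu.hasDerivAt hx).mul hv'x)).congr_deriv
      (by simp only [g]; ring)
  simp only [Pi.sub_apply, h0, sub_zero, intervalIntegral.integral_neg] at hftc
  rw [← hftc, neg_lt_zero]
  have hIoc : volume.restrict (Ioc (0:ℝ) 1) = mu01 :=
    (Measure.restrict_congr_set Ioo_ae_eq_Ioc).symm
  have hg : ∀ᵐ x ∂mu01, 0 ≤ g x := by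
    filter_upwards [hqp, ae_restrict_mem measurableSet_Ioo] with x hqpx hx
    exact mul_nonneg (sub_nonneg.2 hqpx)
      (mul_pos (hu_pos x (Ioo_subset_Icc_self hx)) (hv_pos x (Ioo_subset_Icc_self hx))).le
  refine (intervalIntegral.integral_nonneg_of_ae_restrict_Ioo zero_le_one hg).lt_of_ne
    fun hzero => hne ?_
  rw [eq_comm, intervalIntegral.integral_eq_zero_iff_of_le_of_nonneg_ae zero_le_one
    (by rwa [hIoc]) (by simpa only [Pi.neg_def, neg_neg] using hint.neg), hIoc] at hzero
  filter_upwards [hzero, ae_restrict_mem measurableSet_Ioo] with x hx hmem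
  have huv : 0 < u x * v x :=
    mul_pos (hu_pos x (Ioo_subset_Icc_self hmem)) (hv_pos x (Ioo_subset_Icc_self hmem))
  have := (mul_eq_zero.1 hx).resolve_right huv.ne'
  linarith

end IsRealSol

theorem isRealSol_cosh (a : ℝ) :
    IsRealSol (fun _ => a ^ 2) (fun x => Real.cosh (a * x)) (fun x => a * Real.sinh (a * x)) where
  hasDerivWithinAt x _ := by
    simpa [mul_comm] using (((hasDerivAt_id x).const_mul a).cosh).hasDerivWithinAt
  lipschitzOnWith_deriv :=
    (ContDiff.contDiffOn (by fun_prop)).exists_lipschitzOnWith one_ne_zero (convex_Icc 0 1)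
      isCompact_Icc
  hasDerivAt_deriv := ae_of_all _ fun x => by
    simpa [pow_two, mul_comm, mul_assoc] using ((hasDerivAt_id x).const_mul a).sinh.const_mul a

theorem IsW2Sol.isRealSol_re_mul {B : ℝ → ℂ} {z : ℂ} {y y' : ℝ → ℂ} {q : ℝ → ℝ}
    (h : IsW2Sol B z y y') (hq : ∀ x, -(z ^ 2) * B x = q x) (c : ℂ) :
    IsRealSol q (fun x => (c * y x).re) (fun x => (c * y' x).re) := by
  obtain ⟨hy, ⟨L, hL⟩, hy'⟩ := h
  set T : ℂ →L[ℝ] ℝ := reCLM.comp (ContinuousLinearMap.mul ℝ ℂ c)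
  refine ⟨fun x hx => T.hasFDerivAt.comp_hasDerivWithinAt x (hy x hx),
    ⟨_, T.lipschitz.comp_lipschitzOnWith hL⟩, ?_⟩
  filter_upwards [hy'] with x hx
  have := T.hasFDerivAt.comp_hasDerivAt x hx
  rwa [hq, ← Complex.real_smul, T.map_smul] at this

theorem IsRealSol.isW2Sol_ofReal {B : ℝ → ℂ} {z : ℂ} {q u u' : ℝ → ℝ} (h : IsRealSol q u u')
    (hq : ∀ x, -(z ^ 2) * B x = q x) :
    IsW2Sol B z (fun x => (u x : ℂ)) (fun x => (u' x : ℂ)) := by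
  obtain ⟨hu, ⟨L, hL⟩, hu'⟩ := h
  refine ⟨fun x hx => (hu x hx).ofReal_comp,
    ⟨_, Complex.isometry_ofReal.lipschitz.comp_lipschitzOnWith hL⟩, ?_⟩
  filter_upwards [hu'] with x hx
  simpa [hq] using hx.ofReal_comp

theorem IsW2Sol.eq_zero_of_initial_eq_zero {B : ℝ → ℂ} {z : ℂ} {y y' : ℝ → ℂ} {q : ℝ → ℝ} {M : ℝ}
    (h : IsW2Sol B z y y') (hq : ∀ x, -(z ^ 2) * B x = q x) (hM : ∀ᵐ x ∂mu01, |q x| ≤ M)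
    (h0 : y 0 = 0) (h0' : y' 0 = 0) : ∀ x ∈ Icc (0:ℝ) 1, y x = 0 := by
  have hre (c : ℂ) : ∀ x ∈ Icc (0:ℝ) 1, (c * y x).re = 0 :=
    (h.isRealSol_re_mul hq c).eq_zero_of_initial_eq_zero hM (by simp [h0]) (by simp [h0'])
  intro x hx
  refine Complex.ext ?_ ?_
  · simpa using hre 1 x hx
  · simpa using hre (-I) x hx

theorem IsRealSol.one_lt_sqrt_mul_tanh {B u u' : ℝ → ℝ} {b t : ℝ}
    (hu : IsRealSol (fun x => t ^ 2 * B x) u u') (ht : 0 < t) (hb : 0 ≤ b)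
    (hB : ∀ᵐ x ∂mu01, 0 ≤ B x ∧ B x ≤ b) (hne : ¬ ∀ᵐ x ∂mu01, B x = b)
    (h0 : 0 < u 0) (h0' : u' 0 = 0) (h1 : u' 1 = t * u 1) :
    1 < √b * Real.tanh (t * √b) := by
  set a := t * √b
  have ha : a ^ 2 = t ^ 2 * b := by rw [mul_pow, Real.sq_sqrt hb]
  have hu_pos := hu.pos_of_coeff_nonneg (hB.mono fun x hx => mul_nonneg (sq_nonneg t) hx.1) h0 h0'
  have hW := hu.wronskian_neg_of_le (isRealSol_cosh a)
    (hB.mono fun x hx => by rw [ha]; gcongr; exact hx.2)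
    (fun hall => hne <| hall.mono fun x hx => by
      rw [ha] at hx; exact mul_left_cancel₀ (pow_ne_zero 2 ht.ne') hx)
    hu_pos (fun x _ => Real.cosh_pos _) (by simp [h0'])
  have hu1 := hu_pos 1 (right_mem_Icc.2 zero_le_one)
  simp only [h1, mul_one] at hW
  have hcosh : Real.cosh a < √b * Real.sinh a := by
    have : t * u 1 * (Real.cosh a - √b * Real.sinh a) < 0 := by simp only [a] at hW; linarith
    exact sub_neg.1 (neg_of_mul_neg_right this (mul_pos ht hu1).le)
  rw [Real.tanh_eq_sinh_div_cosh, ← mul_div_assoc, one_lt_div (Real.cosh_pos a)]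
  exact hcosh

theorem quasiEigen_const_of_sqrt_mul_tanh_eq_one {b t : ℝ} (hb : 0 ≤ b) (ht : 0 < t)
    (htanh : √b * Real.tanh (t * √b) = 1) :
    QuasiEigen (fun _ => (b : ℂ)) (I * t) := by
  set a := t * √b
  have hq : -((I * t) ^ 2) * (b : ℂ) = ((a ^ 2 : ℝ) : ℂ) := by
    simp only [a, mul_pow, Real.sq_sqrt hb, I_sq]; push_cast; ring
  refine ⟨by simp [ht.ne'], _, _, (isRealSol_cosh a).isW2Sol_ofReal fun _ => hq,
    ⟨0, left_mem_Icc.2 zero_le_one, by simp⟩, by simp, ?_⟩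
  rw [Real.tanh_eq_sinh_div_cosh, mul_div_assoc', div_eq_one_iff_eq (Real.cosh_pos a).ne']
    at htanh
  have : t * Real.cosh a = a * Real.sinh a := by rw [← htanh]; ring
  simp only [mul_one, mul_assoc]
  exact_mod_cast congrArg (I * ·) (congrArg ((↑) : ℝ → ℂ) this)

theorem statement19_general (b1 b2 : ℝ) (hb1 : 0 ≤ b1) (hb12 : b1 ≤ b2) (hb2 : 0 < b2)
    (B0 : ℝ → ℝ) (hB0 : InAd b1 b2 B0)
    (κ0 : ℂ) (hQE : QuasiEigen (fun x => ((B0 x : ℝ) : ℂ)) κ0)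
    (hre : κ0.re = 0) (him : 0 < κ0.im)
    (hne2 : ¬ (∀ᵐ x ∂mu01, B0 x = b2)) :
    ∃ β1 > (0:ℝ), ∃ B1 : ℝ → ℝ, InAd b1 b2 B1 ∧
      QuasiEigen (fun x => ((B1 x : ℝ) : ℂ)) (κ0 - Complex.I * (β1 : ℂ)) := by
  obtain ⟨-, y, y', hy, ⟨x₁, hx₁, hyx₁⟩, hy'0, hbc⟩ := hQE
  set t₀ := κ0.im
  have hκ : κ0 = I * t₀ := Complex.ext (by simp [hre]) (by simp [t₀])
  have hq (x : ℝ) : -(κ0 ^ 2) * ((B0 x : ℝ) : ℂ) = ((t₀ ^ 2 * B0 x : ℝ) : ℂ) := by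
    rw [hκ, mul_pow, I_sq]; push_cast; ring
  have hB : ∀ᵐ x ∂mu01, 0 ≤ B0 x ∧ B0 x ≤ b2 :=
    hB0.2.mono fun x hx => ⟨hb1.trans hx.1, hx.2⟩
  have hy0 : y 0 ≠ 0 := fun h0 => hyx₁ <| hy.eq_zero_of_initial_eq_zero hq (M := t₀ ^ 2 * b2)
    (hB.mono fun x hx => by rw [abs_of_nonneg (mul_nonneg (sq_nonneg t₀) hx.1)]; gcongr; exact hx.2)
    h0 hy'0 x₁ hx₁
  have hy1 : y' 1 = t₀ * y 1 := by
    rw [hκ, mul_assoc] at hbc; exact (mul_left_cancel₀ I_ne_zero hbc).symm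
  have htanh := (hy.isRealSol_re_mul hq (y 0)⁻¹).one_lt_sqrt_mul_tanh him hb2.le hB hne2
    (by simp [hy0]) (by simp [hy'0]) (by rw [hy1, mul_left_comm]; exact re_ofReal_mul _ _)
  set G : ℝ → ℝ := fun t => √b2 * Real.tanh (t * √b2)
  have hG : Continuous G := by
    simp only [G, Real.tanh_eq_sinh_div_cosh]
    fun_prop (disch := exact fun x => (Real.cosh_pos _).ne')
  obtain ⟨t₁, ht₁, hGt₁⟩ : ∃ t₁ ∈ Ioo 0 t₀, G t₁ = 1 :=
    intermediate_value_Ioo him.le hG.continuousOn ⟨by simp [G], htanh⟩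
  refine ⟨t₀ - t₁, sub_pos.2 ht₁.2, fun _ => b2,
    ⟨aestronglyMeasurable_const, ae_of_all _ fun _ => ⟨hb12, le_rfl⟩⟩, ?_⟩
  rw [show κ0 - I * ((t₀ - t₁ : ℝ) : ℂ) = I * t₁ by rw [hκ]; push_cast; ring]
  exact quasiEigen_const_of_sqrt_mul_tanh_eq_one hb2.le ht₁.1 hGt₁

/-- Non-extreme structures are not optimal on the imaginary axis.
If `B0 ∈ Ad` has a quasi-eigenvalue `κ0 ∈ i·ℝ₊` and `B0` is not a.e. equal to the
constant `b1` nor to the constant `b2`, then `κ0 − iβ1 ∈ K(Ad)` for some `β1 > 0`. -/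
theorem statement19 (b1 b2 : ℝ) (hb1 : 0 ≤ b1) (hb12 : b1 ≤ b2) (hb2 : 0 < b2)
    (B0 : ℝ → ℝ) (hB0 : InAd b1 b2 B0)
    (κ0 : ℂ) (hQE : QuasiEigen (fun x => ((B0 x : ℝ) : ℂ)) κ0)
    (hre : κ0.re = 0) (him : 0 < κ0.im)
    (hne1 : ¬ (∀ᵐ x ∂mu01, B0 x = b1))
    (hne2 : ¬ (∀ᵐ x ∂mu01, B0 x = b2)) :
    ∃ β1 > (0:ℝ), ∃ B1 : ℝ → ℝ, InAd b1 b2 B1 ∧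
      QuasiEigen (fun x => ((B1 x : ℝ) : ℂ)) (κ0 - Complex.I * (β1 : ℂ)) :=
  statement19_general b1 b2 hb1 hb12 hb2 B0 hB0 κ0 hQE hre him hne2
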